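/- arXiv:2501.19387 — 3 statements merged into one kernel-verified Lean document; each statement's English description precedes it below -/
import Mathlib

section
/- Let u_n = (2n+1)·2^n for n ∈ ℤ. Then u satisfies the recurrence u_{n+2} = 4u_{n+1} - 4u_n for all n ∈ ℤ, no term u_n is zero, yet for every odd integer m ≥ 3 there exists n ∈ ℤ with m ∣ u_n (in fact every n of the form n = km + (m-1)/2 with k ∈ ℤ works). -/
/-- `x` lies in `m·ℤ[1/2]`, i.e. `x = m * z / 2^j`. -/
def memMulHalf (m : ℤ) (x : ℚ) : Prop := ∃ (z : ℤ) (j : ℕ), x = m * z / 2 ^ j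

theorem stmt0 (u : ℤ → ℚ) (hu : ∀ n : ℤ, u n = (2 * n + 1) * 2 ^ n) :
    (∀ n : ℤ, u (n + 2) = 4 * u (n + 1) - 4 * u n) ∧
    (∀ n : ℤ, u n ≠ 0) ∧
    (∀ m : ℤ, 3 ≤ m → Odd m →
      (∀ k : ℤ, memMulHalf m (u (k * m + (m - 1) / 2))) ∧
      ∃ n : ℤ, memMulHalf m (u n)) := by
  refine ⟨?_, ?_, ?_⟩
  · intro n
    rw [hu, hu, hu]
    have h2 : (2:ℚ) ^ (n+2) = 2^n * 4 := by
      rw [zpow_add₀ (by norm_num : (2:ℚ) ≠ 0)]; norm_num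
    have h1 : (2:ℚ) ^ (n+1) = 2^n * 2 := by
      rw [zpow_add₀ (by norm_num : (2:ℚ) ≠ 0)]; norm_num
    rw [h1, h2]
    push_cast
    ring
  · intro n h
    rw [hu] at h
    rcases mul_eq_zero.mp h with h | h
    · have h' : ((2*n+1 : ℤ) : ℚ) = 0 := by push_cast; linarith
      have := Int.cast_eq_zero.mp h'
      omega
    · exact (zpow_ne_zero n (by norm_num : (2:ℚ) ≠ 0)) h
  · intro m hm hodd
    obtain ⟨t, ht⟩ := hodd
    have key : ∀ k : ℤ, memMulHalf m (u (k * m + (m - 1) / 2)) := by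
      intro k
      set n := k * m + (m - 1) / 2 with hn
      have hd : 2 * ((m-1)/2) = m - 1 := by omega
      have h2n : 2*n+1 = m*(2*k+1) := by rw [hn]; linear_combination hd
      refine ⟨(2*k+1) * 2 ^ (n + (-n).toNat).toNat, (-n).toNat, ?_⟩
      rw [hu]
      have hc : (2*(n:ℚ)+1) = (m:ℚ)*(2*k+1) := by exact_mod_cast h2n
      have hz : (2:ℚ)^n = 2 ^ ((n + (-n).toNat).toNat) / 2 ^ ((-n).toNat) := by
        rw [eq_div_iff (by positivity)]
        rw [← zpow_natCast (2:ℚ) ((n + (-n).toNat).toNat), ← zpow_natCast (2:ℚ) ((-n).toNat),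
          ← zpow_add₀ (by norm_num : (2:ℚ) ≠ 0)]
        congr 1
        omega
      rw [hc, hz]
      push_cast
      ring
    exact ⟨key, ⟨_, key 0⟩⟩
end

section
/- Let B, C be nonzero rationals with B^k·C^ℓ ∉ {1, -1} for all k ∈ ℤ \ {0} and ℓ ∈ ℤ. Then at least one of the following holds: (1) there is a prime p' with v_{p'}(C) = 0 and v_{p'}(B) ≠ 0; (2) there are primes p', q' with v_{p'}(C)·v_{q'}(B) - v_{q'}(C)·v_{p'}(B) ≠ 0. -/
private lemma val_zpow (p : ℕ) [Fact p.Prime] {q : ℚ} (hq : q ≠ 0) (n : ℤ) :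
    padicValRat p (q ^ n) = n * padicValRat p q := by
  cases n with
  | ofNat m => rw [Int.ofNat_eq_coe, zpow_natCast, padicValRat.pow (q := q)]
  | negSucc m =>
      rw [zpow_negSucc, padicValRat.inv, padicValRat.pow (q := q), Int.negSucc_eq]
      push_cast; ring

private lemma eq_pm_one_of_val_zero (q : ℚ) (hq : q ≠ 0)
    (h : ∀ p : ℕ, p.Prime → padicValRat p q = 0) : q = 1 ∨ q = -1 := by
  have hnum : q.num ≠ 0 := Rat.num_ne_zero.mpr hq
  have hden : q.den ≠ 0 := q.den_nz
  have hd1 : q.den = 1 := by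
    by_contra hd
    obtain ⟨p, pp, hpd⟩ := Nat.exists_prime_and_dvd hd
    haveI : Fact p.Prime := ⟨pp⟩
    have hpn : ¬ p ∣ q.num.natAbs := fun hpn =>
      Nat.Prime.not_dvd_one pp (q.reduced.gcd_eq_one ▸ Nat.dvd_gcd hpn hpd)
    have h1 : padicValInt p q.num = 0 := by
      unfold padicValInt
      exact padicValNat.eq_zero_of_not_dvd hpn
    have h2 : 1 ≤ padicValNat p q.den := one_le_padicValNat_of_dvd hden hpd
    have := h p pp
    unfold padicValRat at this
    omega
  have hn1 : q.num.natAbs = 1 := by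
    by_contra hn
    obtain ⟨p, pp, hpn⟩ := Nat.exists_prime_and_dvd (by simpa using hn)
    haveI : Fact p.Prime := ⟨pp⟩
    have h1 : 1 ≤ padicValInt p q.num := by
      unfold padicValInt
      exact one_le_padicValNat_of_dvd (by simpa using hnum) hpn
    have h2 : padicValNat p q.den = 0 := by rw [hd1]; simp
    have := h p pp
    unfold padicValRat at this
    omega
  have : q.num = 1 ∨ q.num = -1 := Int.natAbs_eq_iff.mp hn1 |>.imp id id
  have hq' : (q : ℚ) = q.num := by
    conv_lhs => rw [← Rat.num_div_den q]
    rw [hd1]; simp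
  rcases this with h | h <;> [left; right] <;> rw [hq', h] <;> norm_num

theorem stmt9 (B C : ℚ) (hB : B ≠ 0) (hC : C ≠ 0)
    (hindep : ∀ k : ℤ, k ≠ 0 → ∀ l : ℤ, B ^ k * C ^ l ≠ 1 ∧ B ^ k * C ^ l ≠ -1) :
    (∃ p' : ℕ, p'.Prime ∧ padicValRat p' C = 0 ∧ padicValRat p' B ≠ 0) ∨
    (∃ p' q' : ℕ, p'.Prime ∧ q'.Prime ∧
      padicValRat p' C * padicValRat q' B - padicValRat q' C * padicValRat p' B ≠ 0) := by
  by_contra hcon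
  push_neg at hcon
  obtain ⟨h1, h2⟩ := hcon
  by_cases hCall : ∀ p : ℕ, p.Prime → padicValRat p C = 0
  · -- then B, C = ±1
    have hBall : ∀ p : ℕ, p.Prime → padicValRat p B = 0 := fun p pp =>
      h1 p pp (hCall p pp)
    have hB1 := eq_pm_one_of_val_zero B hB hBall
    have key : B ^ (1 : ℤ) * C ^ (0 : ℤ) = B := by simp
    rcases hB1 with h | h
    · exact (hindep 1 one_ne_zero 0).1 (by rw [key, h])
    · exact (hindep 1 one_ne_zero 0).2 (by rw [key, h])
  · push_neg at hCall
    obtain ⟨q, qp, hqC⟩ := hCall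
    set c := padicValRat q C with hc
    set b := padicValRat q B with hb
    have hne : B ^ c * C ^ (-b) ≠ 0 :=
      mul_ne_zero (zpow_ne_zero _ hB) (zpow_ne_zero _ hC)
    have hval : ∀ p : ℕ, p.Prime → padicValRat p (B ^ c * C ^ (-b)) = 0 := by
      intro p pp
      haveI : Fact p.Prime := ⟨pp⟩
      have hdet := h2 p q pp qp
      rw [padicValRat.mul (zpow_ne_zero _ hB) (zpow_ne_zero _ hC),
        val_zpow p hB, val_zpow p hC]
      rw [sub_eq_zero] at hdet
      linarith [hdet]
    have := eq_pm_one_of_val_zero _ hne hval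
    rcases this with h | h
    · exact (hindep c hqC (-b)).1 h
    · exact (hindep c hqC (-b)).2 h
end

section
/- Let B, C be nonzero rational numbers. Suppose that for every prime p, whenever v_p(C) = 0 one has v_p(B) = 0, and that for all pairs of primes p, q the determinant v_p(C)·v_q(B) - v_q(C)·v_p(B) equals 0. Then there exist integers k ≠ 0 and ℓ with B^k·C^ℓ ∈ {1, -1}. -/
theorem padicValRat_zpow' {p : ℕ} [Fact p.Prime] {q : ℚ} (hq : q ≠ 0) (k : ℤ) :
    padicValRat p (q ^ k) = k * padicValRat p q := by
  obtain ⟨n, rfl | rfl⟩ := k.eq_nat_or_neg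
  · rw [zpow_natCast, padicValRat.pow q]
  · rw [zpow_neg, zpow_natCast, padicValRat.inv, padicValRat.pow q]
    ring

theorem rat_eq_one_or_neg_one {q : ℚ} (hq : q ≠ 0)
    (h : ∀ p : ℕ, p.Prime → padicValRat p q = 0) : q = 1 ∨ q = -1 := by
  have hnum : q.num ≠ 0 := Rat.num_ne_zero.mpr hq
  have hnumabs : q.num.natAbs ≠ 0 := Int.natAbs_ne_zero.mpr hnum
  have hden : q.den ≠ 0 := q.den_nz
  have key : ∀ p : ℕ, p.Prime → ¬ p ∣ q.num.natAbs ∧ ¬ p ∣ q.den := by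
    intro p hp
    haveI : Fact p.Prime := ⟨hp⟩
    have hval := h p hp
    rw [padicValRat_def] at hval
    have hcop : Nat.Coprime q.num.natAbs q.den := q.reduced
    constructor
    · intro hd
      have hnd : ¬ p ∣ q.den := fun hd' =>
        hp.one_lt.ne' (Nat.eq_one_of_dvd_coprimes hcop hd hd')
      have h1 : 1 ≤ padicValInt p q.num := by
        rw [padicValInt]
        exact one_le_padicValNat_of_dvd hnumabs hd
      have h2 : padicValNat p q.den = 0 := padicValNat.eq_zero_of_not_dvd hnd
      omega
    · intro hd
      have hnd : ¬ p ∣ q.num.natAbs := fun hd' =>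
        hp.one_lt.ne' (Nat.eq_one_of_dvd_coprimes hcop hd' hd)
      have h1 : 1 ≤ padicValNat p q.den :=
        one_le_padicValNat_of_dvd hden hd
      have h2 : padicValInt p q.num = 0 := by
        rw [padicValInt]
        exact padicValNat.eq_zero_of_not_dvd hnd
      omega
  have hnum1 : q.num.natAbs = 1 := by
    by_contra hne
    obtain ⟨p, hp, hpd⟩ := Nat.exists_prime_and_dvd hne
    exact (key p hp).1 hpd
  have hden1 : q.den = 1 := by
    by_contra hne
    obtain ⟨p, hp, hpd⟩ := Nat.exists_prime_and_dvd hne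
    exact (key p hp).2 hpd
  have : q.num = 1 ∨ q.num = -1 := Int.natAbs_eq_iff.mp hnum1
  have hq' : (q.num : ℚ) = q := by
    nth_rewrite 2 [← Rat.num_div_den q]
    rw [hden1]; simp
  rcases this with h' | h'
  · left; rw [← hq', h']; norm_num
  · right; rw [← hq', h']; norm_num

theorem stmt18 (B C : ℚ) (hB : B ≠ 0) (hC : C ≠ 0)
    (h1 : ∀ p : ℕ, p.Prime → padicValRat p C = 0 → padicValRat p B = 0)
    (h2 : ∀ p q : ℕ, p.Prime → q.Prime →
      padicValRat p C * padicValRat q B - padicValRat q C * padicValRat p B = 0) :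
    ∃ k l : ℤ, k ≠ 0 ∧ (B ^ k * C ^ l = 1 ∨ B ^ k * C ^ l = -1) := by
  by_cases hall : ∀ p : ℕ, p.Prime → padicValRat p C = 0
  · have hB1 := rat_eq_one_or_neg_one hB (fun p hp => h1 p hp (hall p hp))
    refine ⟨2, 0, two_ne_zero, ?_⟩
    rcases hB1 with rfl | rfl <;> norm_num
  · push_neg at hall
    obtain ⟨p0, hp0, ha⟩ := hall
    refine ⟨padicValRat p0 C, -padicValRat p0 B, ha, ?_⟩
    have hBk : B ^ (padicValRat p0 C) ≠ 0 := zpow_ne_zero _ hB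
    have hCl : C ^ (-padicValRat p0 B) ≠ 0 := zpow_ne_zero _ hC
    apply rat_eq_one_or_neg_one (mul_ne_zero hBk hCl)
    intro q hq
    haveI : Fact q.Prime := ⟨hq⟩
    rw [padicValRat.mul hBk hCl, padicValRat_zpow' hB, padicValRat_zpow' hC]
    have := h2 p0 q hp0 hq
    linarith
end
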